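/- Let F be a twisting cocycle for the Hopf algebra H and let A be a left H-module algebra with action map ρ: H → End_k(A). For X ∈ End_k(A) set φ⁻¹(X) := Σ ρ(F₁)∘X∘ρ(γ(F₂ζ)), and define the twisted action of End_k(A) on A by X∗a := Σ ((F₁.X))(F₂•a), where h.X := Σ ρ(h⁽¹⁾)∘X∘ρ(γ(h⁽²⁾)). Then for all X ∈ End_k(A) and a ∈ A: φ⁻¹(X)∗a = X(a). -/

import Mathlib

open TensorProduct

noncomputable section

variable (k : Type*) [Field k] (H : Type*) [Ring H] [HopfAlgebra k H]

/-- The comultiplication of `H` as a linear map. -/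
noncomputable def comulL : H →ₗ[k] H ⊗[k] H := Coalgebra.comul

/-- The counit of `H` as a linear map. -/
noncomputable def counitL : H →ₗ[k] k := Coalgebra.counit

/-- The antipode of `H`. -/
noncomputable def anti : H →ₗ[k] H := HopfAlgebra.antipode (R := k)

/-- `F` together with its inverse `Finv` is a twisting (Drinfeld) cocycle:
`F` is invertible, `(Δ⊗id)(F)·(F⊗1) = (id⊗Δ)(F)·(1⊗F)` and `(ε⊗id)(F) = 1 = (id⊗ε)(F)`. -/
def IsCocycle (F Finv : H ⊗[k] H) : Prop :=
  F * Finv = 1 ∧ Finv * F = 1 ∧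
  (TensorProduct.assoc k H H H) ((TensorProduct.map (comulL k H) LinearMap.id F) * (F ⊗ₜ 1))
    = (TensorProduct.map LinearMap.id (comulL k H) F) * ((1 : H) ⊗ₜ F) ∧
  (TensorProduct.lid k H) (TensorProduct.map (counitL k H) LinearMap.id F) = 1 ∧
  (TensorProduct.rid k H) (TensorProduct.map LinearMap.id (counitL k H) F) = 1

/-- `ϑ = Σ γ(F₁)F₂`. -/
noncomputable def theta (F : H ⊗[k] H) : H :=
  LinearMap.mul' k H (TensorProduct.map (anti k H) LinearMap.id F)

/-- `ζ = Σ F̄₂ γ⁻¹(F̄₁)`, where `γinv` is the inverse of the antipode and `Finv = Σ F̄₁⊗F̄₂`. -/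
noncomputable def zeta (γinv : H →ₗ[k] H) (Finv : H ⊗[k] H) : H :=
  LinearMap.mul' k H (TensorProduct.map LinearMap.id γinv ((TensorProduct.comm k H H) Finv))

/-- `R` (with inverse `Rinv`) is a triangular structure: `R` is invertible,
`R Δ(h) = Δᵒᵖ(h) R`, the two hexagon identities `(Δ⊗id)(R) = R₁₃R₂₃`,
`(id⊗Δ)(R) = R₁₃R₁₂` hold, and `R₂₁ R = 1`. -/
def IsTriangular (R Rinv : H ⊗[k] H) : Prop :=
  R * Rinv = 1 ∧ Rinv * R = 1 ∧
  (∀ h : H, R * comulL k H h = (TensorProduct.comm k H H) (comulL k H h) * R) ∧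
  (TensorProduct.assoc k H H H) (TensorProduct.map (comulL k H) LinearMap.id R)
    = (TensorProduct.map LinearMap.id (TensorProduct.mk k H H 1) R) * ((1 : H) ⊗ₜ R) ∧
  (TensorProduct.map LinearMap.id (comulL k H) R)
    = (TensorProduct.map LinearMap.id (TensorProduct.mk k H H 1) R) *
      ((TensorProduct.assoc k H H H) (R ⊗ₜ (1 : H))) ∧
  ((TensorProduct.comm k H H) R) * R = 1

/-- `bcomp U V x y = (U x) ∘ₗ (V y)`, bilinearly in `x, y`. -/
noncomputable def bcomp {A B C : Type*} [AddCommMonoid A] [AddCommMonoid B] [AddCommMonoid C]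
    [Module k A] [Module k B] [Module k C]
    (U : H →ₗ[k] B →ₗ[k] C) (V : H →ₗ[k] A →ₗ[k] B) : H →ₗ[k] H →ₗ[k] (A →ₗ[k] C) :=
  ((((LinearMap.llcomp k A B C) ∘ₗ U).flip) ∘ₗ V).flip

/-- Given an action `α` of `H` on `M`, the induced action of `H ⊗ H` on `M ⊗ M`:
`pairAct α (x ⊗ y) (a ⊗ b) = (α x a) ⊗ (α y b)`. -/
noncomputable def pairAct {M : Type*} [AddCommMonoid M] [Module k M]
    (α : H →ₗ[k] M →ₗ[k] M) : H ⊗[k] H →ₗ[k] (M ⊗[k] M →ₗ[k] M ⊗[k] M) :=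
  (TensorProduct.homTensorHomMap (RingHom.id k) M M M M) ∘ₗ (TensorProduct.map α α)

/-- `sandwich α β (x ⊗ y) a = α x * a * β y`. -/
noncomputable def sandwich {E : Type*} [Ring E] [Algebra k E]
    (α β : H →ₗ[k] E) : H ⊗[k] H →ₗ[k] E →ₗ[k] E :=
  TensorProduct.lift (bcomp k H ((LinearMap.mul k E) ∘ₗ α) ((LinearMap.mul k E).flip ∘ₗ β))

/-- The adjoint action associated with `ρ : H →ₗ E`:
`adAct ρ h a = Σ ρ(h⁽¹⁾) a ρ(γ(h⁽²⁾))`. -/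
noncomputable def adAct {E : Type*} [Ring E] [Algebra k E]
    (ρ : H →ₗ[k] E) : H →ₗ[k] E →ₗ[k] E :=
  (sandwich k H ρ (ρ ∘ₗ anti k H)) ∘ₗ comulL k H

/-- The twisted comultiplication `Δ̃(h) = F⁻¹ Δ(h) F`. -/
noncomputable def comulTw (F Finv : H ⊗[k] H) : H →ₗ[k] H ⊗[k] H :=
  (LinearMap.mulRight k F) ∘ₗ (LinearMap.mulLeft k Finv) ∘ₗ comulL k H

/-- The twisted antipode `γ̃(h) = ϑ⁻¹ γ(h) ϑ`. -/
noncomputable def antiTw (ϑ ϑinv : H) : H →ₗ[k] H :=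
  (LinearMap.mulRight k ϑ) ∘ₗ (LinearMap.mulLeft k ϑinv) ∘ₗ anti k H

variable (A : Type*) [Ring A] [Algebra k A]

/-- `act` makes `A` a left `H`-module algebra:
`act` is a representation of `H`, `h•(ab) = Σ (h⁽¹⁾•a)(h⁽²⁾•b)` and `h•1 = ε(h)1`. -/
def IsModAlg (act : H →ₗ[k] Module.End k A) : Prop :=
  act 1 = 1 ∧ (∀ g h : H, act (g * h) = act g * act h) ∧
  (∀ (h : H) (a b : A),
    act h (a * b) = LinearMap.mul' k A ((pairAct k H act) (comulL k H h) (a ⊗ₜ b))) ∧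
  (∀ h : H, act h 1 = (counitL k H h) • (1 : A))

/-- The adjoint-type action of `H` on `End_k(A)`: `h.X = Σ ρ(h⁽¹⁾) ∘ X ∘ ρ(γ(h⁽²⁾))`. -/
noncomputable def dotAct (act : H →ₗ[k] Module.End k A) :
    H →ₗ[k] Module.End k A →ₗ[k] Module.End k A :=
  (sandwich k H (E := Module.End k A) act (act ∘ₗ anti k H)) ∘ₗ comulL k H

/-!
Expanding the definitions, `φ⁻¹(X) ∗ a = Σ ρ(G₁) X ρ(γ(G₂ζ) G₃) a` with `G = (Δ⊗id)(F)·(F⊗1)`.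
The cocycle identity replaces `G` by `(id⊗Δ)(F)·(1⊗F)`, and then the antipode axiom collapses the
sum to `X (ρ(γ(ζ)ϑ) a)`. Finally `γ(ζ)ϑ = 1`: apply `x ⊗ y ⊗ z ↦ x γ(y) z` to the cocycle identity
in the form `(id⊗Δ)(F⁻¹)·(Δ⊗id)(F) = (1⊗F)·(F⁻¹⊗1)`.
-/

section

variable {k H}

@[simp] lemma anti_mul (a b : H) : anti k H (a * b) = anti k H b * anti k H a :=
  HopfAlgebra.antipode_mul_antidistrib a b

@[simp] lemma theta_tmul (x y : H) : theta k H (x ⊗ₜ y) = anti k H x * y := by simp [theta]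

lemma theta_add (s t : H ⊗[k] H) : theta k H (s + t) = theta k H s + theta k H t := by
  simp [theta]

lemma theta_mul_tmul (t : H ⊗[k] H) (c d : H) :
    theta k H (t * (c ⊗ₜ d)) = anti k H c * theta k H t * d := by
  induction t using TensorProduct.induction_on with
  | zero => simp [theta]
  | tmul x y => simp [mul_assoc]
  | add s t hs ht => simp [add_mul, theta_add, hs, ht, mul_add]

lemma theta_comul (g : H) : theta k H (comulL k H g) = algebraMap k H (counitL k H g) :=
  HopfAlgebra.mul_antipode_rTensor_comul_apply g

lemma theta_comul_mul_tmul (g c d : H) :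
    theta k H (comulL k H g * (c ⊗ₜ d)) = counitL k H g • (anti k H c * d) := by
  rw [theta_mul_tmul, theta_comul, mul_assoc, ← Algebra.smul_def, mul_smul_comm]

lemma anti_zeta (γinv : H →ₗ[k] H) (hγ : ∀ h, anti k H (γinv h) = h) (u : H ⊗[k] H) :
    anti k H (zeta k H γinv u) = LinearMap.mul' k H (map LinearMap.id (anti k H) u) := by
  induction u using TensorProduct.induction_on with
  | zero => simp [zeta]
  | tmul x y => simp [zeta, hγ]
  | add s t hs ht => simp_all [zeta]

lemma rid_counit_mul (u v : H ⊗[k] H) :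
    TensorProduct.rid k H (map LinearMap.id (counitL k H) (u * v)) =
      TensorProduct.rid k H (map LinearMap.id (counitL k H) u) *
        TensorProduct.rid k H (map LinearMap.id (counitL k H) v) :=
  map_mul ((Algebra.TensorProduct.rid k k H).toAlgHom.comp
    (Algebra.TensorProduct.map (AlgHom.id k H) (Bialgebra.counitAlgHom k H))) u v

lemma map_id_comul_mul (u v : H ⊗[k] H) :
    map LinearMap.id (comulL k H) (u * v) =
      map LinearMap.id (comulL k H) u * map LinearMap.id (comulL k H) v :=
  map_mul (Algebra.TensorProduct.map (AlgHom.id k H) (Bialgebra.comulAlgHom k H)) u v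

lemma assoc_mul (x y : (H ⊗[k] H) ⊗[k] H) :
    TensorProduct.assoc k H H H (x * y) =
      TensorProduct.assoc k H H H x * TensorProduct.assoc k H H H y :=
  map_mul (Algebra.TensorProduct.assoc k k k H H H) x y

noncomputable def antiMiddle : H ⊗[k] (H ⊗[k] H) →ₗ[k] H :=
  LinearMap.mul' k H ∘ₗ (LinearMap.mul' k H ∘ₗ (anti k H).rTensor H).lTensor H

@[simp] lemma antiMiddle_tmul (x : H) (t : H ⊗[k] H) :
    antiMiddle (x ⊗ₜ t) = x * theta k H t := rfl

lemma antiMiddle_one_tmul_mul_assoc (u v : H ⊗[k] H) :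
    antiMiddle ((1 ⊗ₜ u) * TensorProduct.assoc k H H H (v ⊗ₜ 1)) =
      LinearMap.mul' k H (map LinearMap.id (anti k H) v) * theta k H u := by
  induction u using TensorProduct.induction_on with
  | zero => simp [theta]
  | tmul a b =>
    induction v using TensorProduct.induction_on with
    | zero => simp
    | tmul c d => simp [mul_assoc]
    | add s t hs ht => simp [add_tmul, mul_add, add_mul, hs, ht]
  | add s t hs ht => simp [tmul_add, add_mul, mul_add, theta_add, hs, ht]

lemma antiMiddle_tmul_comul_mul_assoc (x y z : H) (w : H ⊗[k] H) :
    antiMiddle ((x ⊗ₜ comulL k H y) * TensorProduct.assoc k H H H (w ⊗ₜ z)) =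
      counitL k H y • (x * LinearMap.mul' k H (map LinearMap.id (anti k H) w) * z) := by
  induction w using TensorProduct.induction_on with
  | zero => simp
  | tmul a b => simp [theta_comul_mul_tmul, mul_assoc]
  | add s t hs ht => simp [add_tmul, mul_add, add_mul, hs, ht]

lemma antiMiddle_comul_mul_assoc_comul (u v : H ⊗[k] H) :
    antiMiddle (map LinearMap.id (comulL k H) u *
        TensorProduct.assoc k H H H (map (comulL k H) LinearMap.id v)) =
      TensorProduct.rid k H (map LinearMap.id (counitL k H) u) *
        TensorProduct.lid k H (map (counitL k H) LinearMap.id v) := by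
  induction u using TensorProduct.induction_on with
  | zero => simp
  | tmul x y =>
    induction v using TensorProduct.induction_on with
    | zero => simp
    | tmul x' y' =>
      have hx' : LinearMap.mul' k H (map LinearMap.id (anti k H) (comulL k H x')) =
          algebraMap k H (counitL k H x') :=
        HopfAlgebra.mul_antipode_lTensor_comul_apply x'
      simp only [map_tmul, LinearMap.id_apply, TensorProduct.rid_tmul, TensorProduct.lid_tmul,
        antiMiddle_tmul_comul_mul_assoc, hx']
      rw [← Algebra.commutes, ← Algebra.smul_def, smul_mul_assoc, smul_mul_smul_comm, smul_smul,
        mul_comm]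
    | add s t hs ht => simp only [map_add, mul_add, hs, ht]
  | add s t hs ht => simp only [map_add, add_mul, hs, ht]

variable {F Finv : H ⊗[k] H}

lemma IsCocycle.comul_inv_mul_assoc_comul (hF : IsCocycle k H F Finv) :
    map LinearMap.id (comulL k H) Finv *
        TensorProduct.assoc k H H H (map (comulL k H) LinearMap.id F) =
      (1 ⊗ₜ F) * TensorProduct.assoc k H H H (Finv ⊗ₜ 1) := by
  obtain ⟨hFFinv, hFinvF, hcoc, -, -⟩ := hF
  rw [assoc_mul] at hcoc
  have hcomul : map LinearMap.id (comulL k H) Finv * map LinearMap.id (comulL k H) F = 1 := by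
    rw [← map_id_comul_mul, hFinvF]
    exact map_one (Algebra.TensorProduct.map (AlgHom.id k H) (Bialgebra.comulAlgHom k H))
  have hassoc :
      TensorProduct.assoc k H H H (F ⊗ₜ 1) * TensorProduct.assoc k H H H (Finv ⊗ₜ 1) = 1 := by
    rw [← assoc_mul, Algebra.TensorProduct.tmul_mul_tmul, hFFinv, mul_one]
    exact map_one (Algebra.TensorProduct.assoc k k k H H H)
  calc _ = map LinearMap.id (comulL k H) Finv *
        (TensorProduct.assoc k H H H (map (comulL k H) LinearMap.id F) *
          TensorProduct.assoc k H H H (F ⊗ₜ 1)) *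
        TensorProduct.assoc k H H H (Finv ⊗ₜ 1) := by
        rw [mul_assoc, mul_assoc, hassoc, mul_one]
    _ = _ := by rw [hcoc, ← mul_assoc, hcomul, one_mul]

lemma IsCocycle.rid_counit_inv (hF : IsCocycle k H F Finv) :
    TensorProduct.rid k H (map LinearMap.id (counitL k H) Finv) = 1 := by
  obtain ⟨hFFinv, -, -, -, hεr⟩ := hF
  calc _ = TensorProduct.rid k H (map LinearMap.id (counitL k H) F) *
        TensorProduct.rid k H (map LinearMap.id (counitL k H) Finv) := by rw [hεr, one_mul]
    _ = 1 := by
      rw [← rid_counit_mul, hFFinv]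
      exact map_one ((Algebra.TensorProduct.rid k k H).toAlgHom.comp
        (Algebra.TensorProduct.map (AlgHom.id k H) (Bialgebra.counitAlgHom k H)))

lemma IsCocycle.anti_zeta_mul_theta (hF : IsCocycle k H F Finv) {γinv : H →ₗ[k] H}
    (hγ : ∀ h, anti k H (γinv h) = h) : anti k H (zeta k H γinv Finv) * theta k H F = 1 := by
  have ⟨_, _, _, hεl, _⟩ := hF
  calc _ = antiMiddle ((1 ⊗ₜ F) * TensorProduct.assoc k H H H (Finv ⊗ₜ 1)) := by
        rw [antiMiddle_one_tmul_mul_assoc, anti_zeta γinv hγ]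
    _ = antiMiddle (map LinearMap.id (comulL k H) Finv *
          TensorProduct.assoc k H H H (map (comulL k H) LinearMap.id F)) := by
        rw [hF.comul_inv_mul_assoc_comul]
    _ = 1 := by rw [antiMiddle_comul_mul_assoc_comul, hF.rid_counit_inv, hεl, one_mul]

end

section

variable {k H A}

@[simp] lemma sandwich_tmul {E : Type*} [Ring E] [Algebra k E] (α β : H →ₗ[k] E)
    (x y : H) (Z : E) : sandwich k H α β (x ⊗ₜ y) Z = α x * Z * β y := by
  simp [sandwich, bcomp, mul_assoc]

/-- `Y ∗ a = Σ (u₁.Y)(u₂•a)`; for `u = F` this is the twisted action of the theorem. -/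
noncomputable def twistedAct (ρ : H →ₗ[k] Module.End k A) (u : H ⊗[k] H) (Y : Module.End k A)
    (a : A) : A :=
  TensorProduct.lift
    ((((LinearMap.llcomp k H A A) ∘ₗ ((dotAct k H A ρ).flip Y)).flip) (ρ.flip a)) u

noncomputable def antiMiddleAct (ρ : H →ₗ[k] Module.End k A) (X : Module.End k A) (a : A) :
    H ⊗[k] (H ⊗[k] H) →ₗ[k] A :=
  TensorProduct.lift ((LinearMap.llcomp k (H ⊗[k] H) A A).flip
    (X ∘ₗ ρ.flip a ∘ₗ LinearMap.mul' k H ∘ₗ (anti k H).rTensor H) ∘ₗ ρ)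

@[simp] lemma antiMiddleAct_tmul (ρ : H →ₗ[k] Module.End k A) (X : Module.End k A) (a : A)
    (x : H) (t : H ⊗[k] H) :
    antiMiddleAct ρ X a (x ⊗ₜ t) = ρ x (X (ρ (theta k H t) a)) := rfl

variable {ρ : H →ₗ[k] Module.End k A} (X : Module.End k A) (a : A)

lemma antiMiddleAct_comul_mul_one_tmul (u v : H ⊗[k] H) :
    antiMiddleAct ρ X a (map LinearMap.id (comulL k H) u * (1 ⊗ₜ v)) =
      ρ (TensorProduct.rid k H (map LinearMap.id (counitL k H) u)) (X (ρ (theta k H v) a)) := by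
  induction u using TensorProduct.induction_on with
  | zero => simp
  | tmul x y =>
    induction v using TensorProduct.induction_on with
    | zero => simp [theta]
    | tmul x' y' => simp [theta_comul_mul_tmul]
    | add s t hs ht =>
      simp only [tmul_add, mul_add, map_add, theta_add, LinearMap.add_apply, hs, ht]
  | add s t hs ht => simp only [add_mul, map_add, LinearMap.add_apply, hs, ht]

lemma sandwich_sandwich_apply (hρ : ∀ g h : H, ρ (g * h) = ρ g * ρ h) (c : H) (w v : H ⊗[k] H)
    (y : H) :
    sandwich k H ρ (ρ ∘ₗ anti k H) w
        (sandwich k H ρ (ρ ∘ₗ anti k H ∘ₗ LinearMap.mulRight k c) v X) (ρ y a) =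
      antiMiddleAct ρ (X * ρ (anti k H c)) a (TensorProduct.assoc k H H H ((w * v) ⊗ₜ y)) := by
  induction w using TensorProduct.induction_on with
  | zero => simp
  | tmul w₁ w₂ =>
    induction v using TensorProduct.induction_on with
    | zero => simp
    | tmul v₁ v₂ => simp [hρ, mul_assoc]
    | add s t hs ht => simp only [map_add, LinearMap.add_apply, mul_add, add_tmul, hs, ht]
  | add s t hs ht => simp only [map_add, LinearMap.add_apply, add_mul, add_tmul, hs, ht]

lemma twistedAct_eq_antiMiddleAct (hρ : ∀ g h : H, ρ (g * h) = ρ g * ρ h) (c : H)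
    (u v : H ⊗[k] H) :
    twistedAct ρ u (sandwich k H ρ (ρ ∘ₗ anti k H ∘ₗ LinearMap.mulRight k c) v X) a =
      antiMiddleAct ρ (X * ρ (anti k H c)) a
        (TensorProduct.assoc k H H H (map (comulL k H) LinearMap.id u * (v ⊗ₜ 1))) := by
  induction u using TensorProduct.induction_on with
  | zero => simp [twistedAct]
  | tmul x y =>
    simpa [twistedAct, dotAct] using sandwich_sandwich_apply X a hρ c (comulL k H x) v y
  | add s t hs ht => simp_all [twistedAct, add_mul]

end

theorem twisted_action_compensates_phiInv
    (act : H →ₗ[k] Module.End k A)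
    (F Finv : H ⊗[k] H) (hF : IsCocycle k H F Finv)
    (γinv : H →ₗ[k] H)
    (hγ2 : ∀ h : H, anti k H (γinv h) = h)
    (hact : IsModAlg k H A act) :
    ∀ (X : Module.End k A) (a : A),
      TensorProduct.lift
        ((((LinearMap.llcomp k H A A) ∘ₗ
            ((dotAct k H A act).flip
              ((sandwich k H (E := Module.End k A) act
                  (act ∘ₗ (anti k H) ∘ₗ (LinearMap.mulRight k (zeta k H γinv Finv))) F)
                X))).flip)
          (act.flip a)) F
      = X a := by
  intro X a
  set ζ := zeta k H γinv Finv
  have hζ : anti k H ζ * theta k H F = 1 := hF.anti_zeta_mul_theta hγ2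
  obtain ⟨-, -, hcocycle, -, hcounit⟩ := hF
  obtain ⟨hone, hmul, -, -⟩ := hact
  calc twistedAct act F (sandwich k H act (act ∘ₗ anti k H ∘ₗ LinearMap.mulRight k ζ) F X) a
      = antiMiddleAct act (X * act (anti k H ζ)) a
          (TensorProduct.assoc k H H H (map (comulL k H) LinearMap.id F * (F ⊗ₜ 1))) :=
        twistedAct_eq_antiMiddleAct X a hmul ζ F F
    _ = antiMiddleAct act (X * act (anti k H ζ)) a
          (map LinearMap.id (comulL k H) F * (1 ⊗ₜ F)) := by rw [hcocycle]
    _ = X (act (anti k H ζ * theta k H F) a) := by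
        rw [antiMiddleAct_comul_mul_one_tmul, hcounit, hone, hmul]; rfl
    _ = X a := by rw [hζ, hone]; rfl

end
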